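/- arXiv:2109.04166 — 3 statements merged into one kernel-verified Lean document; each statement's English description precedes it below -/
import Mathlib

section
/- Liouville-type theorem of Nishikawa (Euclidean case): Let n ≥ 1 and let u : ℝⁿ → ℝ be a C² function with u(x) ≥ 0 for all x. If there exists a constant c > 0 such that Δu(x) ≥ c · u(x)² for all x ∈ ℝⁿ, then u vanishes identically on ℝⁿ. -/
/-!
Keller–Osserman barrier argument. On a ball `B(x₀, R)` put `w = A / (R² - |x - x₀|²)²`; for
`A = (24 + 4n) R² / c` one computes `Δw ≤ c w²`. Since `w` blows up at the boundary sphere,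
`u - w` attains an interior maximum at some `y`, where `c u(y)² ≤ Δu(y) ≤ Δw(y) ≤ c w(y)²`, so
`u(y) ≤ w(y)` and hence `u(x₀) ≤ w(x₀) = (24 + 4n) / (c R²)`. Letting `R → ∞` gives `u(x₀) ≤ 0`.
The Hessian comparison at `y` is done one coordinate direction at a time, by restricting to lines.
-/

open Filter Set Metric
open scoped Topology RealInnerProductSpace

/-- The Euclidean Laplacian of `u : ℝⁿ → ℝ`, defined as the trace of the Hessian,
i.e. the sum of the second derivatives in the directions of the standard
orthonormal basis. -/
noncomputable def euclideanLaplacian {n : ℕ} (u : EuclideanSpace ℝ (Fin n) → ℝ)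
    (x : EuclideanSpace ℝ (Fin n)) : ℝ :=
  ∑ i : Fin n,
    iteratedFDeriv ℝ 2 u x ![EuclideanSpace.single i 1, EuclideanSpace.single i 1]

theorem IsLocalMax.deriv_deriv_nonpos {f : ℝ → ℝ} {x₀ : ℝ} (h : IsLocalMax f x₀)
    (hc : ContinuousAt f x₀) : deriv (deriv f) x₀ ≤ 0 := by
  by_contra! hpos
  -- Otherwise `x₀` is also a local minimum, so `f` is locally constant there.
  have hmin := isLocalMin_of_deriv_deriv_pos hpos h.deriv_eq_zero hc
  have hconst : f =ᶠ[𝓝 x₀] fun _ => f x₀ :=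
    (hmin.and h).mono fun _ hx => le_antisymm hx.2 hx.1
  have hderiv : deriv f =ᶠ[𝓝 x₀] fun _ => 0 := hconst.deriv.trans (by simp [EventuallyEq.refl])
  simp [hderiv.deriv_eq] at hpos

theorem IsLocalMax.le_zero_of_hasDerivAt {f f' : ℝ → ℝ} {f'' x₀ : ℝ} (h : IsLocalMax f x₀)
    (hf : ∀ᶠ x in 𝓝 x₀, HasDerivAt f (f' x) x) (hf' : HasDerivAt f' f'' x₀) : f'' ≤ 0 := by
  have hderiv : deriv f =ᶠ[𝓝 x₀] f' := hf.mono fun _ hx => hx.deriv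
  simpa [hderiv.deriv_eq, hf'.deriv] using h.deriv_deriv_nonpos hf.self_of_nhds.continuousAt

theorem IsCompact.exists_isMaxOn_of_forall_notMem_le {X : Type*} [TopologicalSpace X]
    {f : X → ℝ} {U S : Set X} {x₀ : X} (hS : IsCompact S) (hx₀ : x₀ ∈ S) (hf : ContinuousOn f S)
    (hout : ∀ x ∈ U, x ∉ S → f x ≤ f x₀) : ∃ y ∈ S, IsMaxOn f U y := by
  obtain ⟨y, hyS, hy⟩ := hS.exists_isMaxOn ⟨x₀, hx₀⟩ hf
  refine ⟨y, hyS, fun x hx => ?_⟩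
  by_cases hxS : x ∈ S
  · exact hy hxS
  · exact (hout x hx hxS).trans (hy hx₀)

section LineRestriction

variable {E F : Type*} [NormedAddCommGroup E] [NormedSpace ℝ E] [NormedAddCommGroup F]
  [NormedSpace ℝ F] {y v : E}

theorem hasDerivAt_comp_add_smul {g : E → F} {t : ℝ} (hg : DifferentiableAt ℝ g (y + t • v)) :
    HasDerivAt (fun s : ℝ => g (y + s • v)) (fderiv ℝ g (y + t • v) v) t := by
  have hline : HasDerivAt (fun s : ℝ => y + s • v) v t := by
    simpa using ((hasDerivAt_id t).smul_const v).const_add y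
  exact hg.hasFDerivAt.comp_hasDerivAt t hline

theorem hasDerivAt_fderiv_comp_add_smul {g : E → ℝ} (hg : ContDiffAt ℝ 2 g y) :
    HasDerivAt (fun s : ℝ => fderiv ℝ g (y + s • v) v) (iteratedFDeriv ℝ 2 g y ![v, v]) 0 := by
  have hg' : DifferentiableAt ℝ (fderiv ℝ g) (y + (0 : ℝ) • v) := by
    simpa using (hg.fderiv_right (m := 1) le_rfl).differentiableAt one_ne_zero
  rw [iteratedFDeriv_two_apply]
  simpa using (hasDerivAt_comp_add_smul hg').clm_apply (hasDerivAt_const 0 v)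

theorem IsLocalMax.iteratedFDeriv_two_le {g w : E → ℝ} {ψ : ℝ → ℝ} {L : ℝ}
    (hmax : IsLocalMax (fun x => g x - w x) y) (hg : ContDiffAt ℝ 2 g y)
    (hw : ∀ᶠ t in 𝓝 0, HasDerivAt (fun s : ℝ => w (y + s • v)) (ψ t) t) (hψ : HasDerivAt ψ L 0) :
    iteratedFDeriv ℝ 2 g y ![v, v] ≤ L := by
  have hline : Continuous fun s : ℝ => y + s • v := by fun_prop
  have hmax' : IsLocalMax (fun s : ℝ => g (y + s • v) - w (y + s • v)) 0 :=
    IsLocalMax.comp_continuous (f := fun x => g x - w x) (b := 0) (by simpa using hmax)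
      hline.continuousAt
  have hgd : ∀ᶠ t in 𝓝 (0 : ℝ), DifferentiableAt ℝ g (y + t • v) :=
    (hline.tendsto' 0 y (by simp)).eventually
      ((hg.eventually (by simp)).mono fun _ hx => hx.differentiableAt two_ne_zero)
  have := hmax'.le_zero_of_hasDerivAt ((hgd.and hw).mono fun t ht =>
    (hasDerivAt_comp_add_smul ht.1).sub ht.2) ((hasDerivAt_fderiv_comp_add_smul hg).sub hψ)
  linarith

end LineRestriction

theorem hasDerivAt_sub_mul_sub_sq (a β t : ℝ) :
    HasDerivAt (fun s => a - 2 * β * s - s ^ 2) (-2 * β - 2 * t) t :=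
  ((((hasDerivAt_id t).const_mul (2 * β)).const_sub a).sub (hasDerivAt_pow 2 t)).congr_deriv
    (by simp)

theorem hasDerivAt_barrierProfile (A a β : ℝ) {t : ℝ} (ht : a - 2 * β * t - t ^ 2 ≠ 0) :
    HasDerivAt (fun s => A / (a - 2 * β * s - s ^ 2) ^ 2)
      (4 * A * (β + t) / (a - 2 * β * t - t ^ 2) ^ 3) t := by
  refine ((hasDerivAt_const t A).div ((hasDerivAt_sub_mul_sub_sq a β t).pow 2)
    (pow_ne_zero 2 ht)).congr_deriv ?_
  simp only [Pi.pow_apply]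
  field_simp
  ring

theorem hasDerivAt_barrierProfile_deriv (A β : ℝ) {a : ℝ} (ha : a ≠ 0) :
    HasDerivAt (fun t => 4 * A * (β + t) / (a - 2 * β * t - t ^ 2) ^ 3)
      (24 * A * β ^ 2 / a ^ 4 + 4 * A / a ^ 3) 0 := by
  have hl : HasDerivAt (fun t => 4 * A * (β + t)) (4 * A) 0 :=
    (((hasDerivAt_id (0 : ℝ)).const_add β).const_mul (4 * A)).congr_deriv (by simp)
  refine (hl.div ((hasDerivAt_sub_mul_sub_sq a β 0).pow 3)
    (by simpa using pow_ne_zero 3 ha)).congr_deriv ?_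
  norm_num [Pi.pow_apply]
  field_simp
  ring

section Barrier

variable {E : Type*} [NormedAddCommGroup E] {A R : ℝ} {x₀ : E}

noncomputable def ballBarrier (A R : ℝ) (x₀ x : E) : ℝ := A / (R ^ 2 - ‖x - x₀‖ ^ 2) ^ 2

theorem ballBarrier_center : ballBarrier A R x₀ x₀ = A / R ^ 4 := by
  simp [ballBarrier, ← pow_mul]

theorem continuousOn_ballBarrier : ContinuousOn (ballBarrier A R x₀) (ball x₀ R) := by
  intro x hx
  have hpos : 0 < R ^ 2 - ‖x - x₀‖ ^ 2 := by
    rw [mem_ball, dist_eq_norm] at hx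
    nlinarith [norm_nonneg (x - x₀)]
  exact (continuousAt_const.div (by fun_prop) (by positivity)).continuousWithinAt

theorem exists_isLocalMax_sub_ballBarrier [ProperSpace E] {u : E → ℝ}
    (hu : ContinuousOn u (closedBall x₀ R)) (hA : 0 < A) (hR : 0 < R) :
    ∃ y ∈ ball x₀ R, IsLocalMax (fun x => u x - ballBarrier A R x₀ x) y ∧
      u x₀ - ballBarrier A R x₀ x₀ ≤ u y - ballBarrier A R x₀ y := by
  obtain ⟨C, hC⟩ := (isCompact_closedBall x₀ R).exists_bound_of_continuousOn hu
  have hCx₀ := hC x₀ (mem_closedBall_self hR.le)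
  have hC0 : 0 ≤ C := (norm_nonneg _).trans hCx₀
  set D := 2 * C + A / R ^ 4
  have hD : 0 < D := by positivity
  set ε := √(A / D)
  have hε : 0 < ε := by positivity
  set r := √(R ^ 2 - ε)
  have hrR : r < R := (Real.sqrt_lt' hR).2 (by linarith)
  -- Outside `closedBall x₀ r` the barrier exceeds `D = 2C + w(x₀)`.
  have hout : ∀ x ∈ ball x₀ R, x ∉ closedBall x₀ r →
      u x - ballBarrier A R x₀ x ≤ u x₀ - ballBarrier A R x₀ x₀ := by
    intro x hx hxr
    rw [mem_ball, dist_eq_norm] at hx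
    rw [mem_closedBall, dist_eq_norm, not_le] at hxr
    have hf : 0 < R ^ 2 - ‖x - x₀‖ ^ 2 := by nlinarith [norm_nonneg (x - x₀)]
    have hfε : R ^ 2 - ‖x - x₀‖ ^ 2 < ε := by
      have := (Real.sqrt_lt' (hxr.trans_le' (Real.sqrt_nonneg _))).1 hxr
      linarith
    have hDw : D ≤ ballBarrier A R x₀ x :=
      calc D = A / ε ^ 2 := by rw [Real.sq_sqrt (by positivity)]; field_simp
        _ ≤ ballBarrier A R x₀ x := by unfold ballBarrier; gcongr
    have hux := (abs_le.1 (hC x (ball_subset_closedBall (by rwa [mem_ball, dist_eq_norm])))).2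
    rw [ballBarrier_center]
    linarith [(abs_le.1 hCx₀).1]
  have hcont : ContinuousOn (fun x => u x - ballBarrier A R x₀ x) (closedBall x₀ r) :=
    (hu.mono (closedBall_subset_closedBall hrR.le)).sub
      (continuousOn_ballBarrier.mono (closedBall_subset_ball hrR))
  obtain ⟨y, hyr, hmax⟩ := (isCompact_closedBall x₀ r).exists_isMaxOn_of_forall_notMem_le
    (mem_closedBall_self (Real.sqrt_nonneg _)) hcont hout
  have hy : y ∈ ball x₀ R := closedBall_subset_ball hrR hyr
  exact ⟨y, hy, hmax.isLocalMax (isOpen_ball.mem_nhds hy), hmax (mem_ball_self hR)⟩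

variable [InnerProductSpace ℝ E]

theorem ballBarrier_add_smul {y v : E} (hv : ‖v‖ = 1) (s : ℝ) :
    ballBarrier A R x₀ (y + s • v) =
      A / (R ^ 2 - ‖y - x₀‖ ^ 2 - 2 * ⟪y - x₀, v⟫ * s - s ^ 2) ^ 2 := by
  rw [ballBarrier, add_sub_right_comm, norm_add_sq_real, real_inner_smul_right, norm_smul, hv,
    Real.norm_eq_abs, mul_one, sq_abs]
  ring_nf

theorem iteratedFDeriv_two_le_of_isLocalMax_sub_ballBarrier {u : E → ℝ} {y v : E}
    (hu : ContDiffAt ℝ 2 u y) (hy : y ∈ ball x₀ R) (hv : ‖v‖ = 1)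
    (hmax : IsLocalMax (fun x => u x - ballBarrier A R x₀ x) y) :
    iteratedFDeriv ℝ 2 u y ![v, v] ≤
      24 * A * ⟪y - x₀, v⟫ ^ 2 / (R ^ 2 - ‖y - x₀‖ ^ 2) ^ 4 +
        4 * A / (R ^ 2 - ‖y - x₀‖ ^ 2) ^ 3 := by
  set a := R ^ 2 - ‖y - x₀‖ ^ 2
  set β := ⟪y - x₀, v⟫
  have ha : 0 < a := by
    rw [mem_ball, dist_eq_norm] at hy
    nlinarith [norm_nonneg (y - x₀)]
  have hq : ∀ᶠ t in 𝓝 (0 : ℝ), a - 2 * β * t - t ^ 2 ≠ 0 :=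
    (by fun_prop : Continuous fun t : ℝ => a - 2 * β * t - t ^ 2).continuousAt.eventually_ne
      (by simpa using ha.ne')
  refine hmax.iteratedFDeriv_two_le hu (hq.mono fun t ht => ?_)
    (hasDerivAt_barrierProfile_deriv A β ha.ne')
  simpa only [ballBarrier_add_smul hv] using hasDerivAt_barrierProfile A a β ht

theorem sum_iteratedFDeriv_two_le_of_isLocalMax_sub_ballBarrier {ι : Type*} [Fintype ι]
    (b : OrthonormalBasis ι ℝ E) {u : E → ℝ} {y : E} (hu : ContDiffAt ℝ 2 u y) (hA : 0 ≤ A)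
    (hy : y ∈ ball x₀ R) (hmax : IsLocalMax (fun x => u x - ballBarrier A R x₀ x) y) :
    ∑ i, iteratedFDeriv ℝ 2 u y ![b i, b i] ≤
      (24 + 4 * Fintype.card ι) * A * R ^ 2 / (R ^ 2 - ‖y - x₀‖ ^ 2) ^ 4 := by
  set a := R ^ 2 - ‖y - x₀‖ ^ 2 with ha_def
  have ha : 0 < a := by
    rw [mem_ball, dist_eq_norm] at hy
    nlinarith [norm_nonneg (y - x₀)]
  have haR : a ≤ R ^ 2 := by simp only [ha_def]; nlinarith [norm_nonneg (y - x₀)]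
  calc ∑ i, iteratedFDeriv ℝ 2 u y ![b i, b i]
      ≤ ∑ i, (24 * A * ⟪y - x₀, b i⟫ ^ 2 / a ^ 4 + 4 * A / a ^ 3) :=
        Finset.sum_le_sum fun i _ =>
          iteratedFDeriv_two_le_of_isLocalMax_sub_ballBarrier hu hy (b.orthonormal.1 i) hmax
    _ = (24 * A * (R ^ 2 - a) + 4 * Fintype.card ι * A * a) / a ^ 4 := by
        rw [Finset.sum_add_distrib, ← Finset.sum_div, ← Finset.mul_sum, b.sum_sq_inner_left,
          Finset.sum_const, Finset.card_univ, nsmul_eq_mul, ha_def]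
        field_simp
        ring
    _ ≤ (24 + 4 * Fintype.card ι) * A * R ^ 2 / a ^ 4 := by
        gcongr
        nlinarith [mul_nonneg hA ha.le,
          mul_nonneg (mul_nonneg hA (Nat.cast_nonneg (Fintype.card ι))) (sub_nonneg.2 haR)]

end Barrier

theorem le_of_mul_sq_le_euclideanLaplacian {n : ℕ} {u : EuclideanSpace ℝ (Fin n) → ℝ}
    (hu : ContDiff ℝ 2 u) {c : ℝ} (hc : 0 < c)
    (hineq : ∀ x, c * u x ^ 2 ≤ euclideanLaplacian u x) (x₀ : EuclideanSpace ℝ (Fin n)) {R : ℝ}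
    (hR : 0 < R) : u x₀ ≤ (24 + 4 * n) / (c * R ^ 2) := by
  set A := (24 + 4 * n) * R ^ 2 / c with hA_def
  have hA : 0 < A := by positivity
  obtain ⟨y, hy, hmax, hle⟩ :=
    exists_isLocalMax_sub_ballBarrier (x₀ := x₀) hu.continuous.continuousOn hA hR
  have hΔ := sum_iteratedFDeriv_two_le_of_isLocalMax_sub_ballBarrier
    (EuclideanSpace.basisFun (Fin n) ℝ) hu.contDiffAt hA.le hy hmax
  simp only [EuclideanSpace.basisFun_apply, Fintype.card_fin] at hΔ
  -- The choice of `A` makes the barrier a supersolution: `Δw ≤ c w²` at `y`.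
  have hw : (24 + 4 * n) * A * R ^ 2 / (R ^ 2 - ‖y - x₀‖ ^ 2) ^ 4 =
      c * ballBarrier A R x₀ y ^ 2 := by
    rw [ballBarrier, div_pow, ← pow_mul, hA_def]
    field_simp
  have huy : u y ≤ ballBarrier A R x₀ y :=
    le_of_sq_le_sq (le_of_mul_le_mul_left ((hineq y).trans (hΔ.trans hw.le)) hc)
      (by unfold ballBarrier; positivity)
  rw [ballBarrier_center] at hle
  calc u x₀ ≤ A / R ^ 4 := by linarith
    _ = (24 + 4 * n) / (c * R ^ 2) := by rw [hA_def]; field_simp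

theorem nishikawa_liouville_general {n : ℕ}
    (u : EuclideanSpace ℝ (Fin n) → ℝ) (hu : ContDiff ℝ 2 u)
    (hu_nonneg : ∀ x, 0 ≤ u x)
    (c : ℝ) (hc : 0 < c)
    (hineq : ∀ x, c * (u x) ^ 2 ≤ euclideanLaplacian u x) :
    ∀ x, u x = 0 := by
  intro x
  have hlim : Tendsto (fun R : ℝ => (24 + 4 * n) / (c * R ^ 2)) atTop (𝓝 0) :=
    tendsto_const_nhds.div_atTop ((tendsto_pow_atTop two_ne_zero).const_mul_atTop hc)
  have hle : u x ≤ 0 := ge_of_tendsto hlim <| (eventually_gt_atTop 0).mono fun _ hR =>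
    le_of_mul_sq_le_euclideanLaplacian hu hc hineq x hR
  exact le_antisymm hle (hu_nonneg x)

/-- Liouville-type theorem of Nishikawa (Euclidean case): a nonnegative `C²`
function `u` on `ℝⁿ` satisfying `Δu ≥ c u²` for some constant `c > 0` vanishes
identically. -/
theorem nishikawa_liouville {n : ℕ} (hn : 1 ≤ n)
    (u : EuclideanSpace ℝ (Fin n) → ℝ) (hu : ContDiff ℝ 2 u)
    (hu_nonneg : ∀ x, 0 ≤ u x)
    (c : ℝ) (hc : 0 < c)
    (hineq : ∀ x, c * (u x) ^ 2 ≤ euclideanLaplacian u x) :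
    ∀ x, u x = 0 :=
  nishikawa_liouville_general u hu hu_nonneg c hc hineq
end

section
/- Omori–Yau maximum principle on Euclidean space (infimum version): Let n ≥ 1 and let u : ℝⁿ → ℝ be a C² function with u_* = inf u > −∞. Then there exists a sequence of points (x_k), k ∈ ℕ (k ≥ 1), in ℝⁿ such that for each k: (i) u(x_k) < u_* + 1/k, (ii) ‖∇u(x_k)‖ < 1/k, and (iii) Δu(x_k) > −1/k. -/
open Filter Set

theorem IsLocalMin.deriv_deriv_nonneg {f : ℝ → ℝ} {a : ℝ} (hmin : IsLocalMin f a)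
    (hf : ContinuousAt f a) : 0 ≤ deriv (deriv f) a := by
  by_contra! hneg
  have hmax : IsLocalMax f a := isLocalMax_of_deriv_deriv_neg hneg hmin.deriv_eq_zero hf
  have hconst : f =ᶠ[nhds a] fun _ => f a :=
    (hmin.and hmax).mono fun _ h => le_antisymm h.2 h.1
  exact hneg.ne (by rw [hconst.deriv.deriv_eq]; simp)

theorem iteratedDeriv_comp_add_smul {𝕜 E F : Type*} [NontriviallyNormedField 𝕜]
    [NormedAddCommGroup E] [NormedSpace 𝕜 E] [NormedAddCommGroup F] [NormedSpace 𝕜 F]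
    {f : E → F} {k : ℕ} (hf : ContDiff 𝕜 k f) (x h : E) (t : 𝕜) :
    iteratedDeriv k (fun s : 𝕜 => f (x + s • h)) t =
      iteratedFDeriv 𝕜 k f (x + t • h) fun _ => h := by
  have hcomp : (fun s : 𝕜 => f (x + s • h)) =
      (fun y => f (x + y)) ∘ ContinuousLinearMap.smulRight (1 : 𝕜 →L[𝕜] 𝕜) h := by
    funext s; simp
  have hshift : ContDiff 𝕜 k fun y => f (x + y) := hf.comp (contDiff_const.add contDiff_id)
  rw [iteratedDeriv_eq_iteratedFDeriv, hcomp,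
    ContinuousLinearMap.iteratedFDeriv_comp_right _ hshift _ le_rfl, iteratedFDeriv_comp_add_left]
  simp

theorem IsLocalMin.iteratedFDeriv_two_nonneg {E : Type*} [NormedAddCommGroup E]
    [NormedSpace ℝ E] {f : E → ℝ} {x : E} (hmin : IsLocalMin f x) (hf : ContDiff ℝ 2 f) (h : E) :
    0 ≤ iteratedFDeriv ℝ 2 f x ![h, h] := by
  have hline : Continuous fun t : ℝ => x + t • h := by fun_prop
  have hmin_line : IsLocalMin (fun t : ℝ => f (x + t • h)) 0 :=
    IsLocalMin.comp_continuous (g := fun t : ℝ => x + t • h) (by simpa using hmin)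
      hline.continuousAt
  have := hmin_line.deriv_deriv_nonneg (hf.continuous.comp hline).continuousAt
  rw [← iteratedDeriv_one, ← iteratedDeriv_succ', iteratedDeriv_comp_add_smul hf] at this
  convert this using 2
  · simp
  · ext i; fin_cases i <;> rfl

theorem iteratedFDeriv_two_norm_sub_sq {E : Type*} [NormedAddCommGroup E]
    [InnerProductSpace ℝ E] (a x h : E) :
    iteratedFDeriv ℝ 2 (fun y => ‖y - a‖ ^ 2) x ![h, h] = 2 * ‖h‖ ^ 2 := by
  rw [iteratedFDeriv_comp_sub (f := fun y : E => ‖y‖ ^ 2), iteratedFDeriv_two_apply,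
    fderiv_norm_sq, ← FunLike.coe_smul, ContinuousLinearMap.fderiv]
  simp only [Matrix.cons_val_zero, Matrix.cons_val_one, Matrix.cons_val_fin_one, smul_apply,
    nsmul_eq_mul, Nat.cast_ofNat]
  exact congrArg (2 * ·) (real_inner_self_eq_norm_sq h)

theorem Continuous.exists_forall_le_add_mul_norm_sub_sq {E : Type*} [NormedAddCommGroup E]
    [ProperSpace E] {u : E → ℝ} {ε : ℝ} (hu : Continuous u) (hbd : BddBelow (range u))
    (hε : 0 < ε) (a : E) :
    ∃ z, ∀ y, u z + ε * ‖z - a‖ ^ 2 ≤ u y + ε * ‖y - a‖ ^ 2 := by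
  obtain ⟨m, hm⟩ := hbd
  refine (hu.add (by fun_prop)).exists_forall_le
    (tendsto_atTop_add_left_of_le _ m (fun y => hm (mem_range_self y)) ?_)
  exact ((tendsto_pow_atTop two_ne_zero).comp (tendsto_norm_cocompact_atTop.comp
    (Homeomorph.subRight a).map_cocompact.le)).const_mul_atTop hε

section Penalized

variable {E : Type*} [NormedAddCommGroup E] [InnerProductSpace ℝ E] {u : E → ℝ} {ε : ℝ} {a z : E}

theorem IsLocalMin.norm_fderiv_le_of_add_mul_norm_sub_sq
    (hmin : IsLocalMin (fun y => u y + ε * ‖y - a‖ ^ 2) z) (hu : DifferentiableAt ℝ u z)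
    (hε : 0 ≤ ε) : ‖fderiv ℝ u z‖ ≤ 2 * ε * ‖z - a‖ := by
  have hderiv := hu.hasFDerivAt.add (((hasFDerivAt_sub_const a).norm_sq).const_mul ε)
  have hcrit := eq_neg_of_add_eq_zero_left (hmin.hasFDerivAt_eq_zero hderiv)
  rw [hcrit, norm_neg, norm_smul, RCLike.norm_nsmul ℝ, nsmul_eq_mul, ContinuousLinearMap.comp_id,
    innerSL_apply_norm, Real.norm_of_nonneg hε]
  exact le_of_eq (by ring)

theorem IsLocalMin.iteratedFDeriv_two_ge_of_add_mul_norm_sub_sq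
    (hmin : IsLocalMin (fun y => u y + ε * ‖y - a‖ ^ 2) z) (hu : ContDiff ℝ 2 u) (h : E) :
    -(2 * ε * ‖h‖ ^ 2) ≤ iteratedFDeriv ℝ 2 u z ![h, h] := by
  have hsq : ContDiff ℝ 2 fun y => ‖y - a‖ ^ 2 :=
    contDiff_norm_sq ℝ |>.comp (contDiff_id.sub contDiff_const)
  have hpen : iteratedFDeriv ℝ 2 (fun y => ε * ‖y - a‖ ^ 2) z ![h, h] = ε * (2 * ‖h‖ ^ 2) := by
    simp_rw [← smul_eq_mul (a := ε)]
    rw [iteratedFDeriv_const_smul_apply' hsq.contDiffAt, smul_apply,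
      iteratedFDeriv_two_norm_sub_sq]
  have hsecond := hmin.iteratedFDeriv_two_nonneg (hu.add (contDiff_const.mul hsq)) h
  rw [fun_iteratedFDeriv_add_apply hu.contDiffAt (contDiff_const.mul hsq).contDiffAt,
    add_apply, hpen] at hsecond
  linarith

end Penalized

theorem neg_mul_le_euclideanLaplacian {n : ℕ} {u : EuclideanSpace ℝ (Fin n) → ℝ}
    {x : EuclideanSpace ℝ (Fin n)} {c : ℝ}
    (hu : ∀ h, -(c * ‖h‖ ^ 2) ≤ iteratedFDeriv ℝ 2 u x ![h, h]) :
    -(n * c) ≤ euclideanLaplacian u x := by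
  calc -(n * c) = ∑ i : Fin n, -(c * ‖EuclideanSpace.single i (1 : ℝ)‖ ^ 2) := by simp
    _ ≤ euclideanLaplacian u x := Finset.sum_le_sum fun i _ => hu _

theorem ContDiff.exists_omoriYau_point {n : ℕ} {u : EuclideanSpace ℝ (Fin n) → ℝ}
    (hu : ContDiff ℝ 2 u) (hbd : BddBelow (range u)) {ε : ℝ} (hε : 0 < ε) :
    ∃ z, u z < sInf (range u) + ε ∧ ‖gradient u z‖ < ε ∧ -ε < euclideanLaplacian u z := by
  set m := sInf (range u)
  obtain ⟨δ, hδ, hδε⟩ : ∃ δ > 0, (2 * n + 2) * δ < ε :=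
    ⟨ε / (4 * (n + 1)), by positivity, by field_simp; linarith⟩
  obtain ⟨_, ⟨x₀, rfl⟩, hx₀⟩ := exists_lt_of_csInf_lt (range_nonempty u) (lt_add_of_pos_right m hδ)
  obtain ⟨z, hz⟩ := hu.continuous.exists_forall_le_add_mul_norm_sub_sq hbd hδ x₀
  have hmin : IsLocalMin (fun y => u y + δ * ‖y - x₀‖ ^ 2) z := Eventually.of_forall hz
  have hmz : m ≤ u z := csInf_le hbd (mem_range_self z)
  have hzx₀ : u z + δ * ‖z - x₀‖ ^ 2 ≤ u x₀ := by simpa using hz x₀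
  have hclose : ‖z - x₀‖ ≤ 1 := by
    have hsq : ‖z - x₀‖ ^ 2 < 1 :=
      lt_of_mul_lt_mul_left (by linarith : δ * ‖z - x₀‖ ^ 2 < δ * 1) hδ.le
    exact ((sq_lt_one_iff₀ (norm_nonneg _)).1 hsq).le
  have hgrad : ‖gradient u z‖ ≤ 2 * δ * ‖z - x₀‖ :=
    (LinearIsometryEquiv.norm_map _ _).trans_le
      (hmin.norm_fderiv_le_of_add_mul_norm_sub_sq (hu.differentiable two_ne_zero z) hδ.le)
  have hlap := neg_mul_le_euclideanLaplacian (hmin.iteratedFDeriv_two_ge_of_add_mul_norm_sub_sq hu)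
  have hgrad' : ‖gradient u z‖ ≤ 2 * δ :=
    hgrad.trans (mul_le_of_le_one_right (by positivity) hclose)
  have hnδ : 0 ≤ n * δ := mul_nonneg n.cast_nonneg hδ.le
  have hpen : 0 ≤ δ * ‖z - x₀‖ ^ 2 := by positivity
  exact ⟨z, by linarith, by linarith, by linarith⟩

theorem omori_yau_inf_general {n : ℕ}
    (u : EuclideanSpace ℝ (Fin n) → ℝ) (hu : ContDiff ℝ 2 u)
    (hbd : BddBelow (Set.range u)) :
    ∃ x : ℕ → EuclideanSpace ℝ (Fin n), ∀ k : ℕ, 1 ≤ k →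
      (u (x k) < sInf (Set.range u) + 1 / (k : ℝ)) ∧
      ‖gradient u (x k)‖ < 1 / (k : ℝ) ∧
      (-(1 / (k : ℝ)) < euclideanLaplacian u (x k)) := by
  choose! x hx using fun ε (hε : 0 < ε) => hu.exists_omoriYau_point hbd hε
  exact ⟨fun k => x (1 / k), fun k hk => hx _ (one_div_pos.2 (Nat.cast_pos.2 hk))⟩

/-- Omori–Yau maximum principle on Euclidean space (infimum version): if
`u : ℝⁿ → ℝ` is `C²` and bounded below, with infimum `u_*`, then there is a
sequence of points `x k` with `u (x k) < u_* + 1/k`, `‖∇u (x k)‖ < 1/k` and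
`Δu (x k) > -1/k` for every `k ≥ 1`. -/
theorem omori_yau_inf {n : ℕ} (hn : 1 ≤ n)
    (u : EuclideanSpace ℝ (Fin n) → ℝ) (hu : ContDiff ℝ 2 u)
    (hbd : BddBelow (Set.range u)) :
    ∃ x : ℕ → EuclideanSpace ℝ (Fin n), ∀ k : ℕ, 1 ≤ k →
      (u (x k) < sInf (Set.range u) + 1 / (k : ℝ)) ∧
      ‖gradient u (x k)‖ < 1 / (k : ℝ) ∧
      (-(1 / (k : ℝ)) < euclideanLaplacian u (x k)) :=
  omori_yau_inf_general u hu hbd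
end

section
/- Key inequality in the proof of Nishikawa's lemma (Euclidean case): Let n ≥ 1, let c > 0, and let u : ℝⁿ → ℝ be a C² function with u(x) ≥ 0 and Δu(x) ≥ c · u(x)² for all x. Define F : ℝⁿ → ℝ by F = 1/√(1 + u). Then at every point of ℝⁿ one has 0 ≤ c · u²/(1 + u)² ≤ 6 ‖∇F‖² − 2 F ΔF. -/
/-!
Write `F = φ ∘ u` with `φ t = (1 + t)^(-1/2)`. The chain rule gives `∇F = φ'(u) ∇u` and
`ΔF = φ'(u) Δu + φ''(u) ‖∇u‖²`. For this `φ` one has `φ' = -φ / (2(1 + t))` and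
`φ'' = 3φ / (4(1 + t)²)`, so `6 φ'² = 2 φ φ''` and the gradient terms cancel, while
`-2 φ φ' = φ² / (1 + t) = (1 + t)⁻²`. Hence `6 ‖∇F‖² - 2 F ΔF = Δu / (1 + u)² ≥ c u² / (1 + u)²`.
-/

open InnerProductSpace Laplacian
open scoped Gradient RealInnerProductSpace

section ChainRule

variable {E : Type*} [NormedAddCommGroup E] [NormedSpace ℝ E]
  {u : E → ℝ} {φ φ' : ℝ → ℝ} {φ'' : ℝ} {x : E}

theorem iteratedFDeriv_two_comp_apply_diag (hu : ContDiff ℝ 2 u)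
    (hφ : ∀ y, HasDerivAt φ (φ' (u y)) (u y)) (hφ' : HasDerivAt φ' φ'' (u x)) (v : E) :
    iteratedFDeriv ℝ 2 (φ ∘ u) x ![v, v] =
      φ' (u x) * iteratedFDeriv ℝ 2 u x ![v, v] + φ'' * fderiv ℝ u x v ^ 2 := by
  have hud : Differentiable ℝ u := hu.differentiable two_ne_zero
  have hfderiv : fderiv ℝ (φ ∘ u) = fun y ↦ φ' (u y) • fderiv ℝ u y :=
    funext fun y ↦ ((hφ y).comp_hasFDerivAt y (hud y).hasFDerivAt).fderiv
  have hsecond : HasFDerivAt (fun y ↦ φ' (u y) • fderiv ℝ u y)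
      (φ' (u x) • fderiv ℝ (fderiv ℝ u) x + (φ'' • fderiv ℝ u x).smulRight (fderiv ℝ u x)) x :=
    (hφ'.comp_hasFDerivAt x (hud x).hasFDerivAt).smul
      ((hu.fderiv_right one_add_one_eq_two.le).differentiable one_ne_zero x).hasFDerivAt
  rw [iteratedFDeriv_two_apply, iteratedFDeriv_two_apply, hfderiv, hsecond.fderiv]
  simp only [Matrix.cons_val_zero, Matrix.cons_val_one, add_apply, FunLike.coe_smul,
    Pi.smul_apply, ContinuousLinearMap.smulRight_apply, smul_eq_mul]
  ring

end ChainRule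

section InnerProductSpace

variable {E : Type*} [NormedAddCommGroup E] [InnerProductSpace ℝ E] [CompleteSpace E]
  {u : E → ℝ} {φ φ' : ℝ → ℝ} {φ'' : ℝ} {x : E}

theorem HasDerivAt.gradient_comp {d : ℝ} (hφ : HasDerivAt φ d (u x))
    (hu : DifferentiableAt ℝ u x) : ∇ (φ ∘ u) x = d • ∇ u x := by
  refine HasGradientAt.gradient ?_
  rw [hasGradientAt_iff_hasFDerivAt, map_smul, toDual_gradient]
  exact hφ.comp_hasFDerivAt x hu.hasFDerivAt

theorem laplacian_comp [FiniteDimensional ℝ E] (hu : ContDiff ℝ 2 u)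
    (hφ : ∀ y, HasDerivAt φ (φ' (u y)) (u y)) (hφ' : HasDerivAt φ' φ'' (u x)) :
    Δ (φ ∘ u) x = φ' (u x) * Δ u x + φ'' * ‖∇ u x‖ ^ 2 := by
  let b := stdOrthonormalBasis ℝ E
  simp only [laplacian_eq_iteratedFDeriv_orthonormalBasis _ b,
    iteratedFDeriv_two_comp_apply_diag hu hφ hφ', Finset.sum_add_distrib, ← Finset.mul_sum,
    ← inner_gradient_left, b.sum_sq_inner_left]

end InnerProductSpace

theorem euclideanLaplacian_eq_laplacian {n : ℕ} (u : EuclideanSpace ℝ (Fin n) → ℝ) :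
    euclideanLaplacian u = Δ u := by
  simp only [laplacian_eq_iteratedFDeriv_orthonormalBasis u (EuclideanSpace.basisFun (Fin n) ℝ),
    EuclideanSpace.basisFun_apply]
  rfl

section InvSqrtOneAdd

variable {t : ℝ}

theorem hasDerivAt_one_div_sqrt_one_add (ht : -1 < t) :
    HasDerivAt (fun s ↦ 1 / √(1 + s)) (-(1 / √(1 + t)) / (2 * (1 + t))) t := by
  have hpos : 0 < 1 + t := by linarith
  refine ((hasDerivAt_const t (1 : ℝ)).fun_div (((hasDerivAt_id' t).const_add 1).sqrt hpos.ne')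
    (Real.sqrt_pos.2 hpos).ne').congr_deriv ?_
  field_simp
  rw [Real.sq_sqrt hpos.le]
  ring

theorem hasDerivAt_neg_one_div_sqrt_one_add_div (ht : -1 < t) :
    HasDerivAt (fun s ↦ -(1 / √(1 + s)) / (2 * (1 + s)))
      (3 * (1 / √(1 + t)) / (4 * (1 + t) ^ 2)) t := by
  have hpos : 0 < 1 + t := by linarith
  refine ((hasDerivAt_one_div_sqrt_one_add ht).fun_neg.fun_div
    (((hasDerivAt_id' t).const_add 1).const_mul 2) (by positivity)).congr_deriv ?_
  field_simp
  ring

end InvSqrtOneAdd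

theorem nishikawa_key_inequality_general {n : ℕ}
    (c : ℝ) (hc : 0 < c)
    (u : EuclideanSpace ℝ (Fin n) → ℝ) (hu : ContDiff ℝ 2 u)
    (hu_nonneg : ∀ x, 0 ≤ u x)
    (hineq : ∀ x, c * (u x) ^ 2 ≤ euclideanLaplacian u x)
    (F : EuclideanSpace ℝ (Fin n) → ℝ)
    (hF : F = fun x => 1 / Real.sqrt (1 + u x)) :
    ∀ x, 0 ≤ c * (u x) ^ 2 / (1 + u x) ^ 2 ∧
      c * (u x) ^ 2 / (1 + u x) ^ 2 ≤
        6 * ‖gradient F x‖ ^ 2 - 2 * F x * euclideanLaplacian F x := by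
  intro x
  have hFcomp : F = (fun t ↦ 1 / √(1 + t)) ∘ u := hF
  have hφ y : HasDerivAt (fun t ↦ 1 / √(1 + t)) (-(1 / √(1 + u y)) / (2 * (1 + u y))) (u y) :=
    hasDerivAt_one_div_sqrt_one_add (by linarith [hu_nonneg y])
  have hgrad : ∇ F x = (-(1 / √(1 + u x)) / (2 * (1 + u x))) • ∇ u x := by
    rw [hFcomp, (hφ x).gradient_comp (hu.differentiable two_ne_zero x)]
  have hlap : euclideanLaplacian F x =
      -(1 / √(1 + u x)) / (2 * (1 + u x)) * euclideanLaplacian u x +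
        3 * (1 / √(1 + u x)) / (4 * (1 + u x) ^ 2) * ‖∇ u x‖ ^ 2 := by
    rw [euclideanLaplacian_eq_laplacian, euclideanLaplacian_eq_laplacian, hFcomp,
      laplacian_comp (φ' := fun t ↦ -(1 / √(1 + t)) / (2 * (1 + t))) hu hφ
        (hasDerivAt_neg_one_div_sqrt_one_add_div (by linarith [hu_nonneg x]))]
  have hpos : 0 < 1 + u x := by linarith [hu_nonneg x]
  have key : 6 * ‖∇ F x‖ ^ 2 - 2 * F x * euclideanLaplacian F x =
      euclideanLaplacian u x / (1 + u x) ^ 2 := by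
    rw [hlap, hgrad, norm_smul, Real.norm_eq_abs, mul_pow, sq_abs, hFcomp, Function.comp_apply]
    field_simp
    rw [Real.sq_sqrt hpos.le]
    ring
  rw [key]
  exact ⟨by positivity, by gcongr; exact hineq x⟩

/-- Key inequality in the proof of Nishikawa's lemma (Euclidean case): if `u ≥ 0`
is `C²` with `Δu ≥ c u²` for a constant `c > 0`, and `F = 1/√(1 + u)`, then
`0 ≤ c u²/(1 + u)² ≤ 6 ‖∇F‖² - 2 F ΔF` everywhere. -/
theorem nishikawa_key_inequality {n : ℕ} (hn : 1 ≤ n)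
    (c : ℝ) (hc : 0 < c)
    (u : EuclideanSpace ℝ (Fin n) → ℝ) (hu : ContDiff ℝ 2 u)
    (hu_nonneg : ∀ x, 0 ≤ u x)
    (hineq : ∀ x, c * (u x) ^ 2 ≤ euclideanLaplacian u x)
    (F : EuclideanSpace ℝ (Fin n) → ℝ)
    (hF : F = fun x => 1 / Real.sqrt (1 + u x)) :
    ∀ x, 0 ≤ c * (u x) ^ 2 / (1 + u x) ^ 2 ∧
      c * (u x) ^ 2 / (1 + u x) ^ 2 ≤
        6 * ‖gradient F x‖ ^ 2 - 2 * F x * euclideanLaplacian F x :=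
  nishikawa_key_inequality_general c hc u hu hu_nonneg hineq F hF
end
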